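/- For every triple of real numbers (t₁, t₂, t₃) there exist real numbers k₁, k₂, k₃, k₄ such that k₁k₂ + k₃k₄ = t₁, k₁k₃ − k₂k₄ = t₂, and k₂k₃ + k₁k₄ = t₃. -/

import Mathlib

/-!
With `k₁ = 1` and `k₄ = c`, the first two equations become a linear system in
`k₂, k₃` with determinant `1 + c²`, and the third one becomes `φ c = t₃` for
`φ c = c + (t₁ - c t₂)(t₂ + c t₁) / (1 + c²)²`. The correction term is bounded by
`(t₁² + t₂²) / 2`, so the continuous function `φ` is surjective.
-/

open Filter

theorem Real.surjective_of_continuous_of_abs_sub_le {f : ℝ → ℝ} (hf : Continuous f) (C : ℝ)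
    (hC : ∀ x, |f x - x| ≤ C) : Function.Surjective f := by
  refine hf.surjective ?_ ?_
  · refine tendsto_atTop_mono (fun x => ?_) (tendsto_atTop_add_const_right _ (-C) tendsto_id)
    rw [id]
    linarith [(abs_le.mp (hC x)).1]
  · refine tendsto_atBot_mono (fun x => ?_) (tendsto_atBot_add_const_right _ C tendsto_id)
    rw [id]
    linarith [(abs_le.mp (hC x)).2]

namespace QuadraticSystem

variable (t₁ t₂ : ℝ)

noncomputable def correction (c : ℝ) : ℝ :=
  (t₁ - c * t₂) * (t₂ + c * t₁) / (1 + c ^ 2) ^ 2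

theorem continuous_correction : Continuous (correction t₁ t₂) :=
  Continuous.div (by fun_prop) (by fun_prop) fun c => by positivity

theorem abs_correction_le (c : ℝ) : |correction t₁ t₂ c| ≤ (t₁ ^ 2 + t₂ ^ 2) / 2 := by
  have hpos : 0 < (1 + c ^ 2) ^ 2 := by positivity
  -- `|a b| ≤ (a² + b²) / 2` with `a² + b² = (t₁² + t₂²)(1 + c²)`.
  have hamgm : |(t₁ - c * t₂) * (t₂ + c * t₁)| ≤ (t₁ ^ 2 + t₂ ^ 2) * (1 + c ^ 2) / 2 := by
    rw [abs_le]
    constructor <;> nlinarith [sq_nonneg (t₁ - c * t₂ + (t₂ + c * t₁)),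
      sq_nonneg (t₁ - c * t₂ - (t₂ + c * t₁))]
  rw [correction, abs_div, abs_of_pos hpos, div_le_iff₀ hpos]
  have hK : 0 ≤ (t₁ ^ 2 + t₂ ^ 2) * (1 + c ^ 2) := by positivity
  nlinarith [sq_nonneg c]

theorem surjective_add_correction : Function.Surjective fun c => c + correction t₁ t₂ c :=
  Real.surjective_of_continuous_of_abs_sub_le (continuous_id.add (continuous_correction t₁ t₂))
    _ fun c => by simpa using abs_correction_le t₁ t₂ c

end QuadraticSystem

theorem quadratic_system_solvable (t₁ t₂ t₃ : ℝ) :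
    ∃ k₁ k₂ k₃ k₄ : ℝ,
      k₁ * k₂ + k₃ * k₄ = t₁ ∧ k₁ * k₃ - k₂ * k₄ = t₂ ∧ k₂ * k₃ + k₁ * k₄ = t₃ := by
  obtain ⟨c, hc⟩ := QuadraticSystem.surjective_add_correction t₁ t₂ t₃
  have hd : 1 + c ^ 2 ≠ 0 := by positivity
  refine ⟨1, (t₁ - c * t₂) / (1 + c ^ 2), (t₂ + c * t₁) / (1 + c ^ 2), c, ?_, ?_, ?_⟩
  · field_simp
    ring
  · field_simp
    ring
  · rw [← hc]
    unfold QuadraticSystem.correction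
    field_simp
    ring
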